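/- arXiv:1803.02862 — 4 statements merged into one kernel-verified Lean document; each statement's English description precedes it below -/
import Mathlib

section
/- For every finite simple graph G there exists a maximum 2-matching M of G such that the number of connected components of M having at most two vertices is at most the total number of 0-paths and 1-paths of every path cover of G. Consequently, G has a path cover whose total number of 0-paths and 1-paths is minimum over all path covers of G and which is obtained from a maximum 2-matching by deleting one edge from each cycle component. -/
open SimpleGraph

/-- A 2-matching of `G`: a spanning subgraph (given as a graph `M ≤ G` on the same
vertex set) in which every vertex has degree at most 2. -/
def SimpleGraph.IsTwoMatching {V : Type*} (G M : SimpleGraph V) : Prop :=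
  M ≤ G ∧ ∀ v : V, (M.neighborSet v).ncard ≤ 2

/-- A maximum 2-matching of `G`: a 2-matching with the maximum number of edges. -/
def SimpleGraph.IsMaxTwoMatching {V : Type*} (G M : SimpleGraph V) : Prop :=
  G.IsTwoMatching M ∧
    ∀ M' : SimpleGraph V, G.IsTwoMatching M' → M'.edgeSet.ncard ≤ M.edgeSet.ncard

/-- A path cover of `G`, encoded as a spanning linear forest: a spanning subgraph
`P ≤ G` with maximum degree at most 2 and no cycles.  Its connected components are
exactly the vertex-disjoint paths covering all vertices of `G`. -/
def SimpleGraph.IsPathCover {V : Type*} (G P : SimpleGraph V) : Prop :=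
  P ≤ G ∧ (∀ v : V, (P.neighborSet v).ncard ≤ 2) ∧ P.IsAcyclic

/-- The size of a path cover: the number of paths, i.e. of connected components. -/
noncomputable def SimpleGraph.coverSize {V : Type*} (P : SimpleGraph V) : ℕ :=
  Nat.card P.ConnectedComponent

/-- The number of 0-paths (isolated vertices) of a path cover / 2-matching. -/
noncomputable def SimpleGraph.numZeroPaths {V : Type*} (P : SimpleGraph V) : ℕ :=
  {v : V | P.neighborSet v = ∅}.ncard

/-- The number of 1-paths (connected components consisting of a single edge,
i.e. having exactly two vertices) of a path cover. -/
noncomputable def SimpleGraph.numOnePaths {V : Type*} (P : SimpleGraph V) : ℕ :=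
  {c : P.ConnectedComponent | c.supp.ncard = 2}.ncard

/-- The number of connected components having at most two vertices. -/
noncomputable def SimpleGraph.numSmallComponents {V : Type*} (M : SimpleGraph V) : ℕ :=
  {c : M.ConnectedComponent | c.supp.ncard ≤ 2}.ncard

/-- The number of cycle components of a 2-matching: the components in which
every vertex has degree exactly 2. -/
noncomputable def SimpleGraph.numCycleComponents {V : Type*} (M : SimpleGraph V) : ℕ :=
  {c : M.ConnectedComponent | ∀ v ∈ c.supp, (M.neighborSet v).ncard = 2}.ncard

/-!
Among the maximum 2-matchings choose `M` with the fewest components on at most two vertices.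
Given a path cover `P`, take a maximum 2-matching `N` sharing as many edges with `P` as possible.
Every `P`-edge at a vertex of `N`-degree at most one lies in `N`: otherwise it could be added to `N`
after dropping at most one edge of `N` that is not in `P`. So every small component of `N` contains
a whole path of `P`, necessarily a 0- or 1-path, and `M` has at most as many small components as
`N`, hence as `P`. Deleting one edge from each cycle component of `M` gives a path cover with the
same components as `M`, which therefore attains the bound.
-/

namespace SimpleGraph

variable {V : Type*}

section Components

variable {G H : SimpleGraph V}

lemma Walk.mem_of_forall_adj_mem {S : Set V} (hS : ∀ a ∈ S, ∀ b, G.Adj a b → b ∈ S) :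
    ∀ {u v : V}, G.Walk u v → u ∈ S → v ∈ S
  | _, _, .nil, hu => hu
  | _, _, .cons h p, hu => p.mem_of_forall_adj_mem hS (hS _ hu _ h)

lemma supp_connectedComponentMk_subset {S : Set V} (hS : ∀ a ∈ S, ∀ b, G.Adj a b → b ∈ S)
    {v : V} (hv : v ∈ S) : (G.connectedComponentMk v).supp ⊆ S := fun _ hu =>
  (ConnectedComponent.exact hu).symm.some.mem_of_forall_adj_mem hS hv

lemma supp_connectedComponentMk_eq_singleton_iff {v : V} :
    (G.connectedComponentMk v).supp = {v} ↔ G.neighborSet v = ∅ := by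
  refine ⟨fun h => Set.eq_empty_of_forall_notMem fun w hw => ?_, fun h => ?_⟩
  · have hw' : w ∈ (G.connectedComponentMk v).supp :=
      (G.connectedComponentMk v).mem_supp_of_adj_mem_supp rfl hw
    rw [h, Set.mem_singleton_iff] at hw'
    exact G.irrefl (hw' ▸ hw)
  · refine (Set.subset_singleton_iff_eq.mp (supp_connectedComponentMk_subset ?_ rfl)).resolve_left
      (G.connectedComponentMk v).nonempty_supp.ne_empty
    rintro a rfl b hab
    exact absurd (show b ∈ G.neighborSet a from hab) (h ▸ Set.notMem_empty b)

lemma numZeroPaths_eq_ncard :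
    G.numZeroPaths = {c : G.ConnectedComponent | c.supp.ncard = 1}.ncard := by
  refine Set.ncard_congr (fun v _ => G.connectedComponentMk v) ?_ ?_ ?_
  · intro v hv
    simp [supp_connectedComponentMk_eq_singleton_iff.mpr hv]
  · intro v w hv _ hvw
    have hw : w ∈ (G.connectedComponentMk v).supp := hvw ▸ rfl
    rwa [supp_connectedComponentMk_eq_singleton_iff.mpr hv, Set.mem_singleton_iff, eq_comm] at hw
  · intro c hc
    obtain ⟨x, hx⟩ := Set.ncard_eq_one.mp hc
    have hxc : G.connectedComponentMk x = c := (hx ▸ Set.mem_singleton x : x ∈ c.supp)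
    exact ⟨x, supp_connectedComponentMk_eq_singleton_iff.mp (hxc ▸ hx), hxc⟩

variable [Finite V]

lemma numZeroPaths_add_numOnePaths (G : SimpleGraph V) :
    G.numZeroPaths + G.numOnePaths = G.numSmallComponents := by
  have hsplit : {c : G.ConnectedComponent | c.supp.ncard ≤ 2} =
      {c | c.supp.ncard = 1} ∪ {c | c.supp.ncard = 2} := by
    ext c
    have := c.nonempty_supp.ncard_pos
    simp only [Set.mem_ofPred_eq, Set.mem_union]
    omega
  rw [numSmallComponents, hsplit, Set.ncard_union_eq, numZeroPaths_eq_ncard, numOnePaths]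
  exact Set.disjoint_left.mpr fun c (h1 : _ = 1) (h2 : _ = 2) => by omega

lemma numSmallComponents_le_of_le_of_reachable (hle : H ≤ G)
    (hreach : ∀ u v, G.Reachable u v → H.Reachable u v) :
    H.numSmallComponents ≤ G.numSmallComponents := by
  have hsupp (c : H.ConnectedComponent) : (c.map (Hom.ofLE hle)).supp = c.supp := by
    induction c using ConnectedComponent.ind with
    | h v =>
      ext u
      simp only [ConnectedComponent.map_mk, ConnectedComponent.mem_supp_iff,
        ConnectedComponent.eq]
      exact ⟨hreach u v, fun h => h.mono hle⟩
  refine Set.ncard_le_ncard_of_injOn (fun c => c.map (Hom.ofLE hle)) ?_ ?_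
  · intro c hc
    simpa [hsupp] using hc
  · intro c _ c' _ h
    simpa [hsupp] using congrArg ConnectedComponent.supp h

lemma ncard_neighborSet_lt_ncard_supp {c : G.ConnectedComponent} {v : V} (hv : v ∈ c.supp) :
    (G.neighborSet v).ncard < c.supp.ncard := by
  have hsub : insert v (G.neighborSet v) ⊆ c.supp :=
    Set.insert_subset hv fun w hw => c.mem_supp_of_adj_mem_supp hv hw
  have := Set.ncard_le_ncard hsub
  rwa [Set.ncard_insert_of_notMem G.notMem_neighborSet_self] at this

/-- All vertices of a component of `M` with at most two vertices have `M`-degree at most one, so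
the component is closed under `P`-adjacency and contains a whole component of `P`. -/
lemma numSmallComponents_le_of_neighborSet_subset {M P : SimpleGraph V}
    (h : ∀ v, (M.neighborSet v).ncard ≤ 1 → P.neighborSet v ⊆ M.neighborSet v) :
    M.numSmallComponents ≤ P.numSmallComponents := by
  have hsub {c : M.ConnectedComponent} (hc : c.supp.ncard ≤ 2) {v : V} (hv : v ∈ c.supp) :
      (P.connectedComponentMk v).supp ⊆ c.supp := by
    refine supp_connectedComponentMk_subset (fun a ha b hab => ?_) hv
    have hdeg : (M.neighborSet a).ncard ≤ 1 := by
      have := ncard_neighborSet_lt_ncard_supp ha; omega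
    exact c.mem_supp_of_adj_mem_supp ha (h a hdeg hab)
  refine Set.ncard_le_ncard_of_injOn (fun c => P.connectedComponentMk c.out) ?_ ?_
  · intro c (hc : c.supp.ncard ≤ 2)
    exact (Set.ncard_le_ncard (hsub hc c.out_eq)).trans hc
  · intro c hc c' hc' hcc'
    have hmem : c'.out ∈ c.supp :=
      hsub hc c.out_eq ((congrArg ConnectedComponent.supp hcc').symm ▸ rfl)
    exact ConnectedComponent.eq_of_common_vertex hmem c'.out_eq

end Components

section TwoMatching

variable {G M P : SimpleGraph V} {u w : V}

lemma edgeSet_sup_edge (huw : u ≠ w) : (M ⊔ edge u w).edgeSet = insert s(u, w) M.edgeSet := by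
  rw [edgeSet_sup, edgeSet_edge_of_ne huw, Set.union_singleton]

variable [Finite V]

lemma exists_isMaxTwoMatching (G : SimpleGraph V) : ∃ M, G.IsMaxTwoMatching M := by
  obtain ⟨M, hM, hmax⟩ := Set.exists_max_image {N | G.IsTwoMatching N}
    (fun N => N.edgeSet.ncard) (Set.toFinite _) ⟨⊥, bot_le, by simp⟩
  exact ⟨M, hM, hmax⟩

lemma IsTwoMatching.mono {N : SimpleGraph V} (hM : G.IsTwoMatching M) (h : N ≤ M) :
    G.IsTwoMatching N :=
  ⟨h.trans hM.1, fun v => (Set.ncard_le_ncard (neighborSet_mono h v)).trans (hM.2 v)⟩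

lemma ncard_neighborSet_edge_le_one (v : V) : ((edge u w).neighborSet v).ncard ≤ 1 :=
  (Set.ncard_le_one).mpr fun a ha b hb => by
    simp only [mem_neighborSet, edge_adj] at ha hb
    grind

lemma IsTwoMatching.sup_edge (hM : G.IsTwoMatching M) (huw : G.Adj u w)
    (hu : (M.neighborSet u).ncard ≤ 1) (hw : (M.neighborSet w).ncard ≤ 1) :
    G.IsTwoMatching (M ⊔ edge u w) := by
  refine ⟨sup_le hM.1 ((edge_le_iff G).mpr (.inr huw)), fun v => ?_⟩
  rw [neighborSet_sup]
  refine (Set.ncard_union_le _ _).trans ?_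
  by_cases hv : v = u ∨ v = w
  · have := ncard_neighborSet_edge_le_one (u := u) (w := w) v
    rcases hv with rfl | rfl <;> omega
  · have hempty : (edge u w).neighborSet v = ∅ :=
      Set.eq_empty_of_forall_notMem fun y hy => hv (by rw [mem_neighborSet, edge_adj] at hy; tauto)
    simpa [hempty] using hM.2 v

/-- To make room for a `P`-edge `uw` at `w` one may have to drop an `M`-edge at `w`; since `w`
has at most two `P`-neighbours, one of them being `u ∉ N_M(w)`, an `M`-edge outside `P` is
available. -/
lemma IsTwoMatching.exists_deleteEdges (hM : G.IsTwoMatching M)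
    (hPw : (P.neighborSet w).ncard ≤ 2) (hPuw : P.Adj u w) (hMuw : ¬M.Adj u w) :
    ∃ F : Set (Sym2 V), Disjoint F P.edgeSet ∧ F.ncard ≤ 1 ∧
      ((M.deleteEdges F).neighborSet w).ncard ≤ 1 := by
  by_cases hw : (M.neighborSet w).ncard ≤ 1
  · exact ⟨∅, Set.empty_disjoint _, by simp, by simpa using hw⟩
  obtain ⟨x, hxM, hxP⟩ : ∃ x ∈ M.neighborSet w, x ∉ P.neighborSet w \ {u} := by
    refine Set.exists_mem_notMem_of_ncard_lt_ncard ?_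
    have := Set.ncard_sdiff_singleton_of_mem (s := P.neighborSet w) hPuw.symm
    omega
  have hxu : x ≠ u := by
    rintro rfl
    exact hMuw hxM.symm
  refine ⟨{s(w, x)}, Set.disjoint_singleton_left.mpr fun h => hxP ⟨h, hxu⟩, by simp, ?_⟩
  calc ((M.deleteEdges {s(w, x)}).neighborSet w).ncard ≤ (M.neighborSet w \ {x}).ncard :=
        Set.ncard_le_ncard fun y hy => ⟨(deleteEdges_adj.mp hy).1, by
          rintro rfl
          exact (deleteEdges_adj.mp hy).2 rfl⟩
    _ ≤ 1 := by
        rw [Set.ncard_sdiff_singleton_of_mem hxM]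
        have := hM.2 w
        omega

/-- The exchange step: `M'` is `M` plus `uw`, minus at most one edge at `w` outside `P`. -/
lemma IsTwoMatching.exists_ncard_inter_lt (hM : G.IsTwoMatching M) (hP : P ≤ G)
    (hPw : (P.neighborSet w).ncard ≤ 2) (hu : (M.neighborSet u).ncard ≤ 1) (hPuw : P.Adj u w)
    (hMuw : ¬M.Adj u w) :
    ∃ M', G.IsTwoMatching M' ∧ M.edgeSet.ncard ≤ M'.edgeSet.ncard ∧
      (M.edgeSet ∩ P.edgeSet).ncard < (M'.edgeSet ∩ P.edgeSet).ncard := by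
  obtain ⟨F, hFP, hF, hw⟩ := hM.exists_deleteEdges hPw hPuw hMuw
  have hu' : ((M.deleteEdges F).neighborSet u).ncard ≤ 1 :=
    (Set.ncard_le_ncard (neighborSet_mono (deleteEdges_le F) u)).trans hu
  have hnew : s(u, w) ∉ M.edgeSet := hMuw
  have hedges : (M.deleteEdges F ⊔ edge u w).edgeSet = insert s(u, w) (M.edgeSet \ F) := by
    rw [edgeSet_sup_edge hPuw.ne, edgeSet_deleteEdges]
  refine ⟨_, (hM.mono (deleteEdges_le F)).sup_edge (hP hPuw) hu' hw, ?_, ?_⟩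
  · rw [hedges, Set.ncard_insert_of_notMem fun h => hnew h.1]
    have := Set.ncard_le_ncard_sdiff_add_ncard M.edgeSet F
    omega
  · calc (M.edgeSet ∩ P.edgeSet).ncard < (insert s(u, w) (M.edgeSet ∩ P.edgeSet)).ncard := by
          rw [Set.ncard_insert_of_notMem fun h => hnew h.1]
          omega
      _ ≤ _ := by
          refine Set.ncard_le_ncard ?_
          rw [hedges]
          rintro e (rfl | ⟨heM, heP⟩)
          · exact ⟨Set.mem_insert _ _, hPuw⟩
          · exact ⟨Set.mem_insert_of_mem _ ⟨heM, Set.disjoint_right.mp hFP heP⟩, heP⟩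

lemma IsMaxTwoMatching.neighborSet_subset (hM : G.IsMaxTwoMatching M) (hP : P ≤ G)
    (hPdeg : ∀ v, (P.neighborSet v).ncard ≤ 2)
    (hopt : ∀ M', G.IsMaxTwoMatching M' →
      (M'.edgeSet ∩ P.edgeSet).ncard ≤ (M.edgeSet ∩ P.edgeSet).ncard)
    (hu : (M.neighborSet u).ncard ≤ 1) : P.neighborSet u ⊆ M.neighborSet u := by
  intro w hPuw
  by_contra hMuw
  obtain ⟨M', hM', hcard, hlt⟩ := hM.1.exists_ncard_inter_lt hP (hPdeg w) hu hPuw hMuw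
  exact (hopt M' ⟨hM', fun N hN => (hM.2 N hN).trans hcard⟩).not_gt hlt

/-- Among maximum 2-matchings, one sharing the most edges with `P` has no more small components
than `P`. -/
lemma exists_isMaxTwoMatching_numSmallComponents_le (hP : P ≤ G)
    (hPdeg : ∀ v, (P.neighborSet v).ncard ≤ 2) :
    ∃ M, G.IsMaxTwoMatching M ∧ M.numSmallComponents ≤ P.numSmallComponents := by
  obtain ⟨M, hM, hopt⟩ := Set.exists_max_image {N | G.IsMaxTwoMatching N}
    (fun N => (N.edgeSet ∩ P.edgeSet).ncard) (Set.toFinite _) (exists_isMaxTwoMatching G)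
  exact ⟨M, hM, numSmallComponents_le_of_neighborSet_subset fun _ =>
    hM.neighborSet_subset hP hPdeg hopt⟩

end TwoMatching

section CycleComponents

variable {M : SimpleGraph V}

def cycleComponents (M : SimpleGraph V) : Set M.ConnectedComponent :=
  {c | ∀ v ∈ c.supp, (M.neighborSet v).ncard = 2}

lemma isCycles_spanningCoe_toSimpleGraph {c : M.ConnectedComponent}
    (hc : c ∈ M.cycleComponents) : c.toSimpleGraph.spanningCoe.IsCycles := by
  rintro v ⟨w, hw⟩
  rw [mem_neighborSet, c.adj_spanningCoe_toSimpleGraph] at hw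
  rw [← hc v hw.1]
  congr 1
  ext y
  simp [c.adj_spanningCoe_toSimpleGraph, hw.1]

lemma reachable_deleteEdges_of_mem_cycleComponents [Finite V] {c : M.ConnectedComponent}
    (hc : c ∈ M.cycleComponents) {a b : V} (hab : M.Adj a b) (ha : a ∈ c.supp)
    {D : Set (Sym2 V)} (hD : ∀ e ∈ D, ∀ y ∈ e, y ∈ c.supp → e = s(a, b)) :
    (M.deleteEdges D).Reachable a b := by
  have hadj : c.toSimpleGraph.spanningCoe.Adj a b :=
    c.adj_spanningCoe_toSimpleGraph.mpr ⟨ha, hab⟩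
  refine ((isCycles_spanningCoe_toSimpleGraph hc).reachable_deleteEdges hadj).mono ?_
  intro y z hyz
  rw [deleteEdges_adj, c.adj_spanningCoe_toSimpleGraph] at hyz
  exact deleteEdges_adj.mpr
    ⟨hyz.1.2, fun hyzD => hyz.2 (hD _ hyzD y (Sym2.mem_mk_left y z) hyz.1.1)⟩

lemma Reachable.of_forall_adj {G H : SimpleGraph V} (h : ∀ a b, G.Adj a b → H.Reachable a b)
    {u v : V} (huv : G.Reachable u v) : H.Reachable u v := by
  obtain ⟨p⟩ := huv
  induction p with
  | nil => rfl
  | cons hadj _ ih => exact (h _ _ hadj).trans ih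

lemma Walk.IsCycle.neighborSet_toSubgraph_eq [Finite V] {H : SimpleGraph V} (hle : H ≤ M)
    {v z : V} {W : H.Walk v v} (hW : W.IsCycle) (hz : z ∈ W.support)
    (hMz : (M.neighborSet z).ncard ≤ 2) : W.toSubgraph.neighborSet z = M.neighborSet z :=
  Set.eq_of_subset_of_ncard_le (fun _ hy => hle (W.toSubgraph.adj_sub hy))
    (hMz.trans (hW.ncard_neighborSet_toSubgraph_eq_two hz).ge)

/-- A cycle of `M.deleteEdges D` would be a whole component of `M`, hence a cycle component,
and so would have lost an edge to `D`. -/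
lemma isAcyclic_deleteEdges [Finite V] (hM : ∀ v, (M.neighborSet v).ncard ≤ 2)
    {D : Set (Sym2 V)}
    (hD : ∀ c ∈ M.cycleComponents, ∃ a b, M.Adj a b ∧ a ∈ c.supp ∧ s(a, b) ∈ D) :
    (M.deleteEdges D).IsAcyclic := by
  intro v W hW
  have hnbr : ∀ z ∈ W.support, W.toSubgraph.neighborSet z = M.neighborSet z := fun z hz =>
    hW.neighborSet_toSubgraph_eq (deleteEdges_le D) hz (hM z)
  have hsupp : (M.connectedComponentMk v).supp ⊆ {z | z ∈ W.support} := by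
    refine supp_connectedComponentMk_subset (fun a ha b hab => ?_) W.start_mem_support
    rw [← mem_neighborSet, ← hnbr a ha] at hab
    exact W.mem_verts_toSubgraph.mp (W.toSubgraph.edge_vert (W.toSubgraph.adj_symm hab))
  have hcyc : M.connectedComponentMk v ∈ M.cycleComponents := fun z hz => by
    rw [← hnbr z (hsupp hz)]
    exact hW.ncard_neighborSet_toSubgraph_eq_two (hsupp hz)
  obtain ⟨a, b, hab, ha, habD⟩ := hD _ hcyc
  rw [← mem_neighborSet, ← hnbr a (hsupp ha)] at hab
  exact (deleteEdges_adj.mp (W.toSubgraph.adj_sub hab)).2 habD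

lemma exists_isAcyclic_deleteEdges [Finite V] (hM : ∀ v, (M.neighborSet v).ncard ≤ 2) :
    ∃ D ⊆ M.edgeSet, D.ncard = M.numCycleComponents ∧ (M.deleteEdges D).IsAcyclic ∧
      ∀ u v, M.Reachable u v → (M.deleteEdges D).Reachable u v := by
  have hedge (c : M.ConnectedComponent) :
      ∃ a b, c ∈ M.cycleComponents → M.Adj a b ∧ a ∈ c.supp := by
    obtain ⟨a, ha⟩ := c.nonempty_supp
    by_cases hc : c ∈ M.cycleComponents
    · obtain ⟨b, hb⟩ := Set.nonempty_of_ncard_ne_zero (s := M.neighborSet a)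
        (by rw [hc a ha]; omega)
      exact ⟨a, b, fun _ => ⟨hb, ha⟩⟩
    · exact ⟨a, a, fun h => absurd h hc⟩
  choose a b hab using hedge
  have ha c (hc : c ∈ M.cycleComponents) := (hab c hc).2
  replace hab c (hc : c ∈ M.cycleComponents) := (hab c hc).1
  set D := (fun c => s(a c, b c)) '' M.cycleComponents
  have hcomp : ∀ c ∈ M.cycleComponents, ∀ y ∈ s(a c, b c), y ∈ c.supp := by
    intro c hc y hy
    rcases Sym2.mem_iff.mp hy with rfl | rfl
    exacts [ha c hc, c.mem_supp_of_adj_mem_supp (ha c hc) (hab c hc)]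
  have hDc : ∀ c ∈ M.cycleComponents, ∀ e ∈ D, ∀ y ∈ e, y ∈ c.supp → e = s(a c, b c) := by
    rintro c - _ ⟨c', hc', rfl⟩ y hy hyc
    rw [ConnectedComponent.eq_of_common_vertex hyc (hcomp c' hc' y hy)]
  refine ⟨D, ?_, ?_,
    isAcyclic_deleteEdges hM fun c hc => ⟨a c, b c, hab c hc, ha c hc, c, hc, rfl⟩,
    fun u v => Reachable.of_forall_adj fun y z hyz => ?_⟩
  · rintro _ ⟨c, hc, rfl⟩
    exact hab c hc
  · refine Set.InjOn.ncard_image fun c hc c' hc' h => ?_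
    exact ConnectedComponent.eq_of_common_vertex (ha c hc)
      (hcomp c' hc' _ (h ▸ Sym2.mem_mk_left _ _))
  · by_cases hyzD : s(y, z) ∈ D
    · obtain ⟨c, hc, heq⟩ := hyzD
      have hreach :=
        reachable_deleteEdges_of_mem_cycleComponents hc (hab c hc) (ha c hc) (hDc c hc)
      rcases Sym2.eq_iff.mp heq with ⟨rfl, rfl⟩ | ⟨rfl, rfl⟩
      exacts [hreach, hreach.symm]
    · exact (deleteEdges_adj.mpr ⟨hyz, hyzD⟩).reachable

end CycleComponents

end SimpleGraph

/-- There is a maximum 2-matching `M` of `G` whose number of components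
with at most two vertices is at most the total number of 0-paths and 1-paths of every
path cover of `G`; consequently `G` has a path cover minimizing the total number of
0-paths and 1-paths, obtained from `M` by deleting one edge from each cycle component. -/
theorem stmt4 {V : Type*} [Fintype V] (G : SimpleGraph V) :
    ∃ M : SimpleGraph V, G.IsMaxTwoMatching M ∧
      (∀ P : SimpleGraph V, G.IsPathCover P →
        M.numSmallComponents ≤ P.numZeroPaths + P.numOnePaths) ∧
      ∃ P : SimpleGraph V, G.IsPathCover P ∧
        (∀ P' : SimpleGraph V, G.IsPathCover P' →
          P.numZeroPaths + P.numOnePaths ≤ P'.numZeroPaths + P'.numOnePaths) ∧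
        P ≤ M ∧ P.edgeSet.ncard = M.edgeSet.ncard - M.numCycleComponents := by
  obtain ⟨M, hM, hmin⟩ := Set.exists_min_image {N | G.IsMaxTwoMatching N}
    numSmallComponents (Set.toFinite _) (exists_isMaxTwoMatching G)
  have hsmall (P : SimpleGraph V) (hP : G.IsPathCover P) :
      M.numSmallComponents ≤ P.numZeroPaths + P.numOnePaths := by
    obtain ⟨N, hN, hNP⟩ := exists_isMaxTwoMatching_numSmallComponents_le hP.1 hP.2.1
    rw [numZeroPaths_add_numOnePaths]
    exact (hmin N hN).trans hNP
  obtain ⟨D, hDM, hDcard, hacyclic, hreach⟩ := exists_isAcyclic_deleteEdges hM.1.2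
  have hle : M.deleteEdges D ≤ M := deleteEdges_le D
  refine ⟨M, hM, hsmall, M.deleteEdges D, ⟨hle.trans hM.1.1, (hM.1.mono hle).2, hacyclic⟩,
    fun P' hP' => ?_, hle, ?_⟩
  · rw [numZeroPaths_add_numOnePaths]
    exact (numSmallComponents_le_of_le_of_reachable hle hreach).trans (hsmall P' hP')
  · rw [edgeSet_deleteEdges, Set.ncard_sdiff hDM, hDcard]
end

section
/- Let G be a finite simple graph with n vertices, and let P be a path cover of G whose number of 0-paths is minimum among all path covers of G. Then for every path cover P* of G, n + |P| ≤ (3/2)·(n + |P*|). -/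
open SimpleGraph

open Finset in
private lemma isolated_eq_of_reachable' {V : Type*} {M : SimpleGraph V} {v w : V}
    (h : M.neighborSet v = ∅) (hr : M.Reachable v w) : v = w := by
  obtain ⟨p⟩ := hr
  cases p with
  | nil => rfl
  | cons hadj p =>
      exact absurd hadj (by
        have := Set.eq_empty_iff_forall_notMem.mp h
        simpa [SimpleGraph.mem_neighborSet] using this _)

open Finset in
private lemma key_count {V : Type*} [Fintype V] (M : SimpleGraph V) :
    2 * M.coverSize ≤ Fintype.card V + M.numZeroPaths ∧
      M.numZeroPaths ≤ M.coverSize := by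
  classical
  haveI : Fintype M.ConnectedComponent := Fintype.ofFinite _
  set f : V → M.ConnectedComponent := M.connectedComponentMk with hf
  have hsurj : Function.Surjective f := fun c => c.exists_rep
  have hcard : Fintype.card V =
      ∑ c : M.ConnectedComponent, (univ.filter fun v => f v = c).card := by
    rw [← card_univ]
    exact Finset.card_eq_sum_card_fiberwise (fun x _ => mem_univ _)
  have hfibpos : ∀ c : M.ConnectedComponent,
      1 ≤ (univ.filter fun v => f v = c).card := by
    intro c
    obtain ⟨v, hv⟩ := hsurj c
    exact Finset.card_pos.mpr ⟨v, by simp [hv]⟩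
  set S : Finset M.ConnectedComponent :=
    univ.filter fun c => (univ.filter fun v => f v = c).card = 1 with hS
  have hfib2 : ∀ c ∉ S, 2 ≤ (univ.filter fun v => f v = c).card := by
    intro c hc
    have := hfibpos c
    simp only [hS, mem_filter, mem_univ, true_and] at hc
    omega
  have hzp : M.numZeroPaths = (univ.filter fun v : V => M.neighborSet v = ∅).card := by
    rw [SimpleGraph.numZeroPaths]
    rw [show {v : V | M.neighborSet v = ∅} =
      ↑(univ.filter fun v : V => M.neighborSet v = ∅) by simp]
    exact Set.ncard_coe_finset _
  have hinj : ∀ v ∈ (univ.filter fun v : V => M.neighborSet v = ∅),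
      ∀ w ∈ (univ.filter fun v : V => M.neighborSet v = ∅), f v = f w → v = w := by
    intro v hv w hw hvw
    simp only [mem_filter] at hv
    exact isolated_eq_of_reachable' hv.2 (ConnectedComponent.exact hvw)
  have himg : ∀ v ∈ (univ.filter fun v : V => M.neighborSet v = ∅), f v ∈ S := by
    intro v hv
    simp only [mem_filter, mem_univ, true_and] at hv
    simp only [hS, mem_filter, mem_univ, true_and]
    rw [Finset.card_eq_one]
    refine ⟨v, Finset.eq_singleton_iff_unique_mem.mpr ⟨by simp, ?_⟩⟩
    intro w hw
    simp only [mem_filter, mem_univ, true_and] at hw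
    exact (isolated_eq_of_reachable' hv (ConnectedComponent.exact hw.symm)).symm
  have hsurjS : ∀ c ∈ S, ∃ v, ∃ _ : v ∈ (univ.filter fun v : V => M.neighborSet v = ∅),
      f v = c := by
    intro c hc
    simp only [hS, mem_filter, mem_univ, true_and] at hc
    obtain ⟨v, hv⟩ := Finset.card_eq_one.mp hc
    have hvmem : f v = c := by
      have : v ∈ (univ.filter fun v => f v = c) := hv ▸ Finset.mem_singleton_self v
      simpa using this
    refine ⟨v, ?_, hvmem⟩
    simp only [mem_filter, mem_univ, true_and]
    rw [Set.eq_empty_iff_forall_notMem]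
    intro w hw
    have hwadj : M.Adj v w := hw
    have : w ∈ (univ.filter fun u => f u = c) := by
      simp only [mem_filter, mem_univ, true_and]
      rw [← hvmem]
      exact ConnectedComponent.sound hwadj.symm.reachable
    rw [hv, Finset.mem_singleton] at this
    exact M.ne_of_adj hwadj this.symm
  have hScard : (univ.filter fun v : V => M.neighborSet v = ∅).card = S.card :=
    Finset.card_bij (fun v _ => f v) himg hinj hsurjS
  have hcover : M.coverSize = (univ : Finset M.ConnectedComponent).card := by
    rw [SimpleGraph.coverSize, Nat.card_eq_fintype_card, card_univ]
  constructor
  · have hsum : ∑ c : M.ConnectedComponent, (univ.filter fun v => f v = c).card ≥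
        ∑ c ∈ S, 1 + ∑ c ∈ Sᶜ, 2 := by
      rw [← Finset.sum_add_sum_compl S]
      gcongr with c hc c hc
      · exact hfibpos c
      · exact hfib2 c (by simpa using hc)
    have hcompl : Sᶜ.card = (univ : Finset M.ConnectedComponent).card - S.card :=
      Finset.card_compl S
    have hSle : S.card ≤ (univ : Finset M.ConnectedComponent).card := Finset.card_le_univ S
    simp only [Finset.sum_const, smul_eq_mul, mul_one] at hsum
    rw [hcard, hzp, hScard, hcover]
    omega
  · rw [hzp, hScard, hcover]
    exact Finset.card_le_univ S

/-- If a path cover `P` of a finite simple graph on `n` vertices minimizes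
the number of 0-paths, then for every path cover `P*`, `n + |P| ≤ (3/2)·(n + |P*|)`. -/
theorem stmt9 {V : Type*} [Fintype V] (G P : SimpleGraph V)
    (hP : G.IsPathCover P)
    (hmin : ∀ Q : SimpleGraph V, G.IsPathCover Q →
      P.numZeroPaths ≤ Q.numZeroPaths) :
    ∀ Pstar : SimpleGraph V, G.IsPathCover Pstar →
      ((Fintype.card V : ℝ) + P.coverSize) ≤
        (3 / 2) * ((Fintype.card V : ℝ) + Pstar.coverSize) := by
  intro Pstar hPstar
  obtain ⟨h1, _⟩ := key_count P
  obtain ⟨_, h2⟩ := key_count Pstar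
  have h3 := hmin Pstar hPstar
  have h4 : 2 * (Fintype.card V + P.coverSize) ≤ 3 * (Fintype.card V + Pstar.coverSize) := by
    omega
  have h5 := (Nat.cast_le (α := ℝ)).mpr h4
  push_cast at h5
  linarith
end

section
/- For all nonnegative real numbers a1, a2, b1, b2, it holds that min( a1 + max(a2, b1) + b2 , b1 + max(b2, a1) + a2 ) ≤ (3/2) · max{ a1 + a2, a1 + b1, b1 + b2, a2 + b2 }. -/
/-- For all nonnegative reals `a1, a2, b1, b2`,
`min(a1 + max(a2, b1) + b2, b1 + max(b2, a1) + a2)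
  ≤ (3/2) · max{a1 + a2, a1 + b1, b1 + b2, a2 + b2}`. -/
theorem stmt10 (a1 a2 b1 b2 : ℝ)
    (ha1 : 0 ≤ a1) (ha2 : 0 ≤ a2) (hb1 : 0 ≤ b1) (hb2 : 0 ≤ b2) :
    min (a1 + max a2 b1 + b2) (b1 + max b2 a1 + a2) ≤
      (3 / 2) * max (max (a1 + a2) (a1 + b1)) (max (b1 + b2) (a2 + b2)) := by
  set M := max (max (a1 + a2) (a1 + b1)) (max (b1 + b2) (a2 + b2)) with hM
  have m1 : a1 + a2 ≤ M := le_trans (le_max_left _ _) (le_max_left _ _)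
  have m2 : a1 + b1 ≤ M := le_trans (le_max_right _ _) (le_max_left _ _)
  have m3 : b1 + b2 ≤ M := le_trans (le_max_left _ _) (le_max_right _ _)
  have m4 : a2 + b2 ≤ M := le_trans (le_max_right _ _) (le_max_right _ _)
  rcases le_total a2 b1 with h1 | h1 <;> rcases le_total b2 a1 with h2 | h2
  · rw [max_eq_right h1, max_eq_right h2]
    rcases le_total a2 b2 with h3 | h3 <;> rcases le_total a1 b1 with h4 | h4 <;>
      first
      | (apply le_trans (min_le_left _ _); linarith)
      | (apply le_trans (min_le_right _ _); linarith)
  · rw [max_eq_right h1, max_eq_left h2]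
    rcases le_total a2 b2 with h3 | h3 <;> rcases le_total a1 b1 with h4 | h4 <;>
      first
      | (apply le_trans (min_le_left _ _); linarith)
      | (apply le_trans (min_le_right _ _); linarith)
  · rw [max_eq_left h1, max_eq_right h2]
    rcases le_total a2 b2 with h3 | h3 <;> rcases le_total a1 b1 with h4 | h4 <;>
      first
      | (apply le_trans (min_le_left _ _); linarith)
      | (apply le_trans (min_le_right _ _); linarith)
  · rw [max_eq_left h1, max_eq_left h2]
    rcases le_total a2 b2 with h3 | h3 <;> rcases le_total a1 b1 with h4 | h4 <;>
      first
      | (apply le_trans (min_le_left _ _); linarith)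
      | (apply le_trans (min_le_right _ _); linarith)
end

section
/- Let G be a finite simple graph, let M be a maximum 2-matching of G, and let v be an isolated vertex of M. If v is adjacent in G to a vertex lying on a cycle component of M, then G has a maximum 2-matching with strictly fewer isolated vertices than M. -/
open SimpleGraph

/-!
Swap one cycle edge `wu` at the neighbour `w` of `v` for the edge `vw`. Degrees stay at most 2
and the number of edges is unchanged, so the result is again a maximum 2-matching. Now `v` is
covered, and no vertex becomes isolated: `w` gains `v`, and `u` keeps its other cycle neighbour.
-/

namespace SimpleGraph

variable {V : Type*} {G M M' : SimpleGraph V}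

theorem IsMaxTwoMatching.of_ncard_edgeSet_eq (hM : G.IsMaxTwoMatching M)
    (hM' : G.IsTwoMatching M') (h : M'.edgeSet.ncard = M.edgeSet.ncard) :
    G.IsMaxTwoMatching M' :=
  ⟨hM', fun N hN => (hM.2 N hN).trans h.ge⟩

section EdgeSwap

variable {v w u x y : V}

theorem edgeSet_deleteEdges_sup_edge (hvw : v ≠ w) :
    (M.deleteEdges {s(w, u)} ⊔ edge v w).edgeSet = insert s(v, w) (M.edgeSet \ {s(w, u)}) := by
  rw [edgeSet_sup, edgeSet_deleteEdges, edgeSet_edge_of_ne hvw, Set.union_comm,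
    Set.singleton_union]

theorem ncard_edgeSet_deleteEdges_sup_edge (hvw : v ≠ w) (hMvw : ¬M.Adj v w) (hwu : M.Adj w u) :
    (M.deleteEdges {s(w, u)} ⊔ edge v w).edgeSet.ncard = M.edgeSet.ncard := by
  rw [edgeSet_deleteEdges_sup_edge hvw, Set.ncard_exchange (s := M.edgeSet) hMvw hwu]

theorem neighborSet_deleteEdges_sup_edge_subset_of_ne (hxv : x ≠ v) (hxw : x ≠ w) :
    (M.deleteEdges {s(w, u)} ⊔ edge v w).neighborSet x ⊆ M.neighborSet x := by
  rintro y (⟨hxy, -⟩ | hxy)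
  · exact hxy
  · grind

theorem neighborSet_deleteEdges_sup_edge_left_subset :
    (M.deleteEdges {s(w, u)} ⊔ edge v w).neighborSet v ⊆ insert w (M.neighborSet v) := by
  rintro y (⟨hvy, -⟩ | hvy)
  · exact Or.inr hvy
  · grind

theorem neighborSet_deleteEdges_sup_edge_right_subset :
    (M.deleteEdges {s(w, u)} ⊔ edge v w).neighborSet w ⊆ insert v (M.neighborSet w \ {u}) := by
  rintro y (hwy | hwy)
  · rw [deleteEdges_adj] at hwy
    exact Or.inr ⟨hwy.1, fun hyu => hwy.2 (by rw [Set.mem_singleton_iff.mp hyu]; rfl)⟩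
  · grind

theorem adj_deleteEdges_sup_edge_of_adj (hxy : M.Adj x y) (hne : s(x, y) ≠ s(w, u)) :
    (M.deleteEdges {s(w, u)} ⊔ edge v w).Adj x y :=
  Or.inl ((deleteEdges_adj ..).2 ⟨hxy, hne⟩)

theorem IsTwoMatching.deleteEdges_sup_edge [Finite V] (hM : G.IsTwoMatching M)
    (hGvw : G.Adj v w) (hv : (M.neighborSet v).ncard ≤ 1) (hwu : M.Adj w u) :
    G.IsTwoMatching (M.deleteEdges {s(w, u)} ⊔ edge v w) := by
  refine ⟨sup_le ((deleteEdges_le _).trans hM.1) ((edge_le_iff _).2 (Or.inr hGvw)), fun x => ?_⟩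
  obtain rfl | hxv := eq_or_ne x v
  · calc _ ≤ (insert w (M.neighborSet x)).ncard :=
          Set.ncard_le_ncard neighborSet_deleteEdges_sup_edge_left_subset
      _ ≤ (M.neighborSet x).ncard + 1 := Set.ncard_insert_le _ _
      _ ≤ 2 := by omega
  obtain rfl | hxw := eq_or_ne x w
  · calc _ ≤ (insert v (M.neighborSet x \ {u})).ncard :=
          Set.ncard_le_ncard neighborSet_deleteEdges_sup_edge_right_subset
      _ ≤ (M.neighborSet x \ {u}).ncard + 1 := Set.ncard_insert_le _ _
      _ = (M.neighborSet x).ncard := Set.ncard_sdiff_singleton_add_one hwu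
      _ ≤ 2 := hM.2 x
  · exact (Set.ncard_le_ncard (neighborSet_deleteEdges_sup_edge_subset_of_ne hxv hxw)).trans
      (hM.2 x)

theorem setOf_neighborSet_deleteEdges_sup_edge_eq_empty_ssubset (hvw : v ≠ w)
    (hv : M.neighborSet v = ∅) (hu : ∃ y, M.Adj u y ∧ y ≠ w) :
    {x | (M.deleteEdges {s(w, u)} ⊔ edge v w).neighborSet x = ∅} ⊂ {x | M.neighborSet x = ∅} := by
  have hvw_swap : (M.deleteEdges {s(w, u)} ⊔ edge v w).Adj v w :=
    Or.inr ((edge_adj _ _ _ _).2 ⟨Or.inl ⟨rfl, rfl⟩, hvw⟩)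
  refine Set.ssubset_iff_subset_ne.2 ⟨fun x hx => ?_, fun h => ?_⟩
  · refine Set.eq_empty_of_forall_notMem fun y hxy => ?_
    rw [Set.mem_ofPred_eq, Set.eq_empty_iff_forall_notMem] at hx
    by_cases hne : s(x, y) = s(w, u)
    · obtain ⟨rfl, -⟩ | ⟨rfl, -⟩ := Sym2.eq_iff.1 hne
      · exact hx v hvw_swap.symm
      · obtain ⟨z, hxz, hzw⟩ := hu
        exact hx z (adj_deleteEdges_sup_edge_of_adj hxz (by grind [Sym2.eq_iff]))
    · exact hx y (adj_deleteEdges_sup_edge_of_adj hxy hne)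
  · have hv' : v ∈ {x | (M.deleteEdges {s(w, u)} ⊔ edge v w).neighborSet x = ∅} := h ▸ hv
    exact (Set.eq_empty_iff_forall_notMem.1 hv') w hvw_swap

end EdgeSwap

end SimpleGraph

/-- If an isolated vertex `v` of a maximum 2-matching `M` of `G` is
adjacent in `G` to a vertex `w` lying on a cycle component of `M` (a component all of
whose vertices have degree 2), then `G` has a maximum 2-matching with strictly fewer
isolated vertices than `M`. -/
theorem stmt11 {V : Type*} [Fintype V] (G M : SimpleGraph V)
    (hM : G.IsMaxTwoMatching M) (v : V) (hv : M.neighborSet v = ∅)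
    (w : V) (hadj : G.Adj v w)
    (hw : ∀ x : V, M.Reachable w x → (M.neighborSet x).ncard = 2) :
    ∃ M' : SimpleGraph V, G.IsMaxTwoMatching M' ∧
      M'.numZeroPaths < M.numZeroPaths := by
  obtain ⟨u, hwu⟩ : (M.neighborSet w).Nonempty :=
    Set.nonempty_of_ncard_ne_zero (by rw [hw w .rfl]; decide)
  obtain ⟨y, huy, hyw⟩ := Set.exists_ne_of_one_lt_ncard (by rw [hw u hwu.reachable]; decide) w
  have hMvw : ¬M.Adj v w := fun h => (Set.eq_empty_iff_forall_notMem.1 hv) w h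
  refine ⟨M.deleteEdges {s(w, u)} ⊔ edge v w,
    hM.of_ncard_edgeSet_eq (hM.1.deleteEdges_sup_edge hadj (by simp [hv]) hwu)
      (ncard_edgeSet_deleteEdges_sup_edge hadj.ne hMvw hwu), ?_⟩
  exact Set.ncard_lt_ncard
    (setOf_neighborSet_deleteEdges_sup_edge_eq_empty_ssubset hadj.ne hv ⟨y, huy, hyw⟩)
end
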